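/- If 1, θ, α₁, θ·α₂ are linearly independent over ℚ, then S is dense in ℝ × (ℝ/ℤ) × (ℝ/ℤ). -/

import Mathlib

/-- The set `S = { (m − k·θ, k·α₁ mod 1, m·α₂ mod 1) : k, m ∈ ℕ }` in
`ℝ × (ℝ/ℤ) × (ℝ/ℤ)`. -/
def Sset (θ α₁ α₂ : ℝ) : Set (ℝ × AddCircle (1 : ℝ) × AddCircle (1 : ℝ)) :=
  {x | ∃ k m : ℕ, x = ((m : ℝ) - (k : ℝ) * θ,
    (((k : ℝ) * α₁ : ℝ) : AddCircle (1 : ℝ)),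
    (((m : ℝ) * α₂ : ℝ) : AddCircle (1 : ℝ)))}

/-!
Since `m α₂ = k (θ α₂) + (m - k θ) α₂`, the set `S` is the image, under the continuous map
`(s, c) ↦ (s, c₁, c₂ + s α₂)`, of the pairs `(m - k θ, k • (θ, α₁, θ α₂) mod ℤ³)`. By Kronecker's
theorem the multiples `k • (θ, α₁, θ α₂)` are dense in the torus `𝕋³`, also for `k ≥ K`; choosing
`k θ` close to `-s` mod 1 and `m` the integer nearest to `k θ + s` approximates any `(s, c)` with
`c₀ = -s`, and these pairs map onto the whole space.

Kronecker's theorem comes from duality: a proper closed subgroup of `ℝⁿ` takes integer values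
under some nonzero functional (it either contains a line, which can be projected away, or it is
discrete and hence a lattice in its span), and such a functional on `ℤⁿ + ℤ v` is an integer
relation between `1, v₁, …, vₙ`.
-/

open Module Submodule Set Function Metric Filter Topology

section NormedSpace

variable {E : Type*} [NormedAddCommGroup E] [NormedSpace ℝ E]

lemma exists_norm_zsmul_sub_smul_le (h : E) (t : ℝ) :
    ∃ z : ℤ, ‖z • h - t • ‖h‖⁻¹ • h‖ ≤ ‖h‖ := by
  refine ⟨round (t / ‖h‖), ?_⟩
  have hrepr : (round (t / ‖h‖) : ℤ) • h - t • ‖h‖⁻¹ • h =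
      (round (t / ‖h‖) - t / ‖h‖ : ℝ) • h := by
    rw [sub_smul, smul_smul, ← div_eq_mul_inv, Int.cast_smul_eq_zsmul]
  rw [hrepr, norm_smul, Real.norm_eq_abs, abs_sub_comm]
  exact mul_le_of_le_one_left (norm_nonneg h) ((abs_sub_round _).trans (by norm_num))

namespace AddSubgroup

lemma exists_forall_smul_mem_of_forall_exists_norm_lt [FiniteDimensional ℝ E] {H : AddSubgroup E}
    (hc : IsClosed (H : Set E)) (hsmall : ∀ ε > 0, ∃ h ∈ H, h ≠ 0 ∧ ‖h‖ < ε) :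
    ∃ u : E, u ≠ 0 ∧ ∀ t : ℝ, t • u ∈ H := by
  choose h hmem hne hlt using fun n : ℕ => hsmall (1 / (n + 1)) (by positivity)
  have hdir : ∀ n, ‖h n‖⁻¹ • h n ∈ sphere (0 : E) 1 := fun n => by
    simp [norm_smul, inv_mul_cancel₀ (norm_ne_zero_iff.2 (hne n))]
  obtain ⟨u, hu, φ, hφ, hconv⟩ := (isCompact_sphere (0 : E) 1).tendsto_subseq hdir
  refine ⟨u, ne_zero_of_mem_unit_sphere ⟨u, hu⟩, fun t => ?_⟩
  have hnorm : Tendsto (fun n => ‖h (φ n)‖) atTop (𝓝 0) :=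
    squeeze_zero (fun n => norm_nonneg _) (fun n => (hlt (φ n)).le)
      (tendsto_one_div_add_atTop_nhds_zero_nat.comp hφ.tendsto_atTop)
  choose z hz using fun n => exists_norm_zsmul_sub_smul_le (h (φ n)) t
  have happrox : Tendsto (fun n => z n • h (φ n) - t • ‖h (φ n)‖⁻¹ • h (φ n)) atTop (𝓝 0) :=
    squeeze_zero_norm hz hnorm
  have hlim : Tendsto (fun n => z n • h (φ n)) atTop (𝓝 (t • u)) := by
    simpa using happrox.add (hconv.const_smul t)
  exact hc.mem_of_tendsto hlim (Eventually.of_forall fun n => zsmul_mem (hmem (φ n)) _)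

lemma exists_intValued_of_forall_le_norm [FiniteDimensional ℝ E] {H : AddSubgroup E} {ε : ℝ}
    (hε : 0 < ε) (hsep : ∀ h ∈ H, h ≠ 0 → ε ≤ ‖h‖) (hne : H ≠ ⊤) :
    ∃ f : E →ₗ[ℝ] ℝ, f ≠ 0 ∧ ∀ h ∈ H, ∃ z : ℤ, f h = z := by
  set L : Submodule ℤ E := H.toIntSubmodule
  by_cases hspan : span ℝ (L : Set E) = ⊤
  · have : DiscreteTopology L := .of_forall_le_norm hε fun x hx =>
      hsep x x.2 (by simpa using hx)
    have : IsZLattice ℝ L := ⟨hspan⟩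
    let b := Module.Free.chooseBasis ℤ L
    have : Nontrivial E := by
      contrapose! hne
      exact eq_top_iff.2 fun x _ => Subsingleton.elim (0 : E) x ▸ H.zero_mem
    obtain ⟨i⟩ := (b.ofZLatticeBasis ℝ L).index_nonempty
    refine ⟨(b.ofZLatticeBasis ℝ L).coord i, fun h0 => ?_, fun h hh => ⟨b.repr ⟨h, hh⟩ i, ?_⟩⟩
    · simpa using LinearMap.congr_fun h0 (b.ofZLatticeBasis ℝ L i)
    · simpa using Basis.ofZLatticeBasis_repr_apply ℝ L b ⟨h, hh⟩ i
  · obtain ⟨f, hf0, hker⟩ := exists_dual_map_eq_bot_of_lt_top (lt_top_iff_ne_top.2 hspan)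
      inferInstance
    refine ⟨f, hf0, fun h hh => ⟨0, ?_⟩⟩
    have hmem : f h ∈ (span ℝ (L : Set E)).map f := ⟨h, subset_span hh, rfl⟩
    simpa [hker] using hmem

theorem exists_intValued_of_isClosed [FiniteDimensional ℝ E] {H : AddSubgroup E}
    (hc : IsClosed (H : Set E)) (hne : H ≠ ⊤) :
    ∃ f : E →ₗ[ℝ] ℝ, f ≠ 0 ∧ ∀ h ∈ H, ∃ z : ℤ, f h = z := by
  induction hn : finrank ℝ E using Nat.strong_induction_on generalizing E with
  | _ n ih =>
  by_cases hdisc : ∃ ε > 0, ∀ h ∈ H, h ≠ 0 → ε ≤ ‖h‖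
  · obtain ⟨ε, hε, hsep⟩ := hdisc
    exact exists_intValued_of_forall_le_norm hε hsep hne
  push Not at hdisc
  obtain ⟨u, hu, hline⟩ := exists_forall_smul_mem_of_forall_exists_norm_lt hc hdisc
  have hU : ∀ x ∈ span ℝ {u}, x ∈ H := fun x hx => by
    obtain ⟨t, rfl⟩ := mem_span_singleton.1 hx
    exact hline t
  obtain ⟨W, hUW⟩ := Submodule.exists_isCompl (span ℝ {u})
  have hsub : ∀ x, x - W.projection _ hUW.symm x ∈ span ℝ {u} := fun x => by
    rw [← eq_sub_of_add_eq (projection_add_projection_eq_self hUW x)]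
    exact projection_apply_mem _ _
  have hproj : ∀ x ∈ H, W.projection _ hUW.symm x ∈ H := fun x hx => by
    simpa using H.sub_mem hx (hU _ (hsub x))
  have hne' : H.comap W.subtype.toAddMonoidHom ≠ ⊤ := by
    refine fun htop => hne (eq_top_iff.2 fun x _ => ?_)
    have hW : W.projection _ hUW.symm x ∈ H :=
      mem_comap.1 (htop ▸ mem_top (W.projectionOnto _ hUW.symm x))
    simpa using H.add_mem (hU _ (hsub x)) hW
  have hrank : finrank ℝ W < n := by
    have := Submodule.finrank_add_eq_of_isCompl hUW
    rw [finrank_span_singleton hu] at this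
    omega
  obtain ⟨g, hg, hgH⟩ := ih _ hrank (hc.preimage continuous_subtype_val) hne' rfl
  refine ⟨g ∘ₗ W.projectionOnto _ hUW.symm, fun h0 => hg ?_,
    fun h hh => hgH _ (mem_comap.2 (hproj h hh))⟩
  ext w
  simpa using LinearMap.congr_fun h0 w

end AddSubgroup

end NormedSpace

lemma DenseRange.const_add_nsmul {G : Type*} [AddGroup G] [TopologicalSpace G]
    [SeparatelyContinuousAdd G] {a : G}
    (ha : DenseRange fun k : ℕ => k • a) (K : ℕ) : DenseRange fun k : ℕ => (K + k) • a := by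
  simp_rw [add_nsmul]
  exact (Homeomorph.addLeft (K • a)).surjective.denseRange.comp ha (Homeomorph.continuous _)

noncomputable def torusProj (ι : Type*) : (ι → ℝ) →+ (ι → AddCircle (1 : ℝ)) :=
  (QuotientAddGroup.mk' (AddSubgroup.zmultiples (1 : ℝ))).compLeft ι

@[simp]
lemma torusProj_apply {ι : Type*} (x : ι → ℝ) (i : ι) :
    torusProj ι x i = (x i : AddCircle (1 : ℝ)) :=
  rfl

lemma nsmul_torusProj_apply {ι : Type*} (k : ℕ) (v : ι → ℝ) (i : ι) :
    (k • torusProj ι v) i = ((k * v i : ℝ) : AddCircle (1 : ℝ)) := by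
  rw [← map_nsmul, torusProj_apply, Pi.smul_apply, nsmul_eq_mul]

lemma continuous_torusProj (ι : Type*) : Continuous (torusProj ι) :=
  continuous_pi fun i => (AddCircle.continuous_mk' 1).comp (continuous_apply i)

lemma torusProj_surjective (ι : Type*) : Surjective (torusProj ι) := fun y =>
  ⟨fun i => (QuotientAddGroup.mk_surjective (y i)).choose,
    funext fun i => (QuotientAddGroup.mk_surjective (y i)).choose_spec⟩

lemma single_one_mem_ker_torusProj {ι : Type*} [DecidableEq ι] (i : ι) :
    Pi.single i (1 : ℝ) ∈ (torusProj ι).ker := by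
  ext j
  rcases eq_or_ne j i with rfl | hji
  · simp [AddCircle.coe_period]
  · simp [hji]

theorem dense_zmultiples_sup_ker_torusProj {n : ℕ} (v : Fin n → ℝ)
    (hv : LinearIndependent ℚ (Fin.cons 1 v : Fin (n + 1) → ℝ)) :
    Dense ((AddSubgroup.zmultiples v ⊔ (torusProj (Fin n)).ker : AddSubgroup (Fin n → ℝ)) :
      Set (Fin n → ℝ)) := by
  set G := AddSubgroup.zmultiples v ⊔ (torusProj (Fin n)).ker
  rw [dense_iff_closure_eq, ← G.topologicalClosure_coe, ← AddSubgroup.coe_top,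
    SetLike.coe_set_eq]
  by_contra hne
  obtain ⟨f, hf, hfG⟩ := AddSubgroup.exists_intValued_of_isClosed G.isClosed_topologicalClosure hne
  have hG : G ≤ G.topologicalClosure := G.le_topologicalClosure
  obtain ⟨z, hz⟩ := hfG v (hG (AddSubgroup.mem_sup_left (AddSubgroup.mem_zmultiples v)))
  choose w hw using fun i =>
    hfG _ (hG (AddSubgroup.mem_sup_right (single_one_mem_ker_torusProj (ι := Fin n) i)))
  have hrel :
      ∑ j, (Fin.cons (-z) w : Fin (n + 1) → ℤ) j • (Fin.cons 1 v : Fin (n + 1) → ℝ) j = 0 := by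
    have hfv : f v = ∑ i, v i * w i := by
      conv_lhs => rw [← (Pi.basisFun ℝ (Fin n)).sum_repr v]
      simp [hw]
    simp [Fin.sum_univ_succ, ← hz, hfv, mul_comm]
  have hw0 : w = 0 := funext fun i => by
    simpa using Fintype.linearIndependent_iff.1 (hv.restrict_scalars' ℤ) _ hrel i.succ
  refine hf ((Pi.basisFun ℝ (Fin n)).ext fun i => ?_)
  simp [hw, hw0]

theorem denseRange_nsmul_torusProj {n : ℕ} (v : Fin n → ℝ)
    (hv : LinearIndependent ℚ (Fin.cons 1 v : Fin (n + 1) → ℝ)) :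
    DenseRange fun k : ℕ => k • torusProj (Fin n) v := by
  rw [← denseRange_zsmul_iff_nsmul, DenseRange, ← AddSubgroup.coe_zmultiples,
    ← AddMonoidHom.map_zmultiples]
  have hd := dense_zmultiples_sup_ker_torusProj v hv
  rw [← AddSubgroup.comap_map_eq, AddSubgroup.coe_comap] at hd
  simpa [image_preimage_eq _ (torusProj_surjective _)] using
    (torusProj_surjective (Fin n)).denseRange.dense_image (continuous_torusProj _) hd

theorem mem_closure_range_sub_nsmul_torusProj {ι : Type*} [Fintype ι] {v : ι → ℝ} {i : ι}
    (hvi : 0 < v i) (hv : DenseRange fun k : ℕ => k • torusProj ι v) {s : ℝ}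
    {c : ι → AddCircle (1 : ℝ)} (hc : c i = -s) :
    (s, c) ∈
      closure (range fun km : ℕ × ℕ => ((km.2 : ℝ) - km.1 * v i, km.1 • torusProj ι v)) := by
  rw [Metric.mem_closure_iff]
  intro δ hδ
  obtain ⟨K, hK⟩ := exists_nat_gt ((1 - s) / v i)
  obtain ⟨k, hk⟩ := Metric.denseRange_iff.1 (hv.const_add_nsmul K) c (min δ 1) (lt_min hδ one_pos)
  set y : ℝ := ((K + k : ℕ) : ℝ) * v i + s with hy_def
  have hround : |y - round y| < min δ 1 := by
    have hki := (dist_le_pi_dist _ _ i).trans_lt hk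
    rwa [nsmul_torusProj_apply, hc, dist_comm, dist_eq_norm, sub_neg_eq_add, ← AddCircle.coe_add,
      UnitAddCircle.norm_eq] at hki
  -- the choice of `K` makes `y > 1`, so the integer nearest to `y` is a natural number
  have hy : 1 < y := by
    rw [div_lt_iff₀ hvi] at hK
    have : (K : ℝ) ≤ (K + k : ℕ) := by exact_mod_cast Nat.le_add_right K k
    nlinarith
  have hround_nonneg : 0 ≤ round y := by
    have : (0 : ℝ) < round y := by linarith [(abs_lt.1 hround).2, min_le_right δ 1]
    exact_mod_cast this.le
  lift round y to ℕ using hround_nonneg with m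
  refine ⟨_, ⟨(K + k, m), rfl⟩, ?_⟩
  rw [Prod.dist_eq, max_lt_iff, Real.dist_eq]
  refine ⟨?_, hk.trans_le (min_le_left _ _)⟩
  have : s - ((m : ℝ) - ((K + k : ℕ) : ℝ) * v i) = y - ((m : ℤ) : ℝ) := by
    rw [hy_def]; push_cast; ring
  rw [this]
  exact hround.trans_le (min_le_left _ _)

theorem stmt12_general (θ α₁ α₂ : ℝ) (hθ : 0 < θ)
    (hli : LinearIndependent ℚ ![(1 : ℝ), θ, α₁, θ * α₂]) :
    Dense (Sset θ α₁ α₂) := by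
  set v : Fin 3 → ℝ := ![θ, α₁, θ * α₂]
  let Ψ : ℝ × (Fin 3 → AddCircle (1 : ℝ)) → ℝ × AddCircle (1 : ℝ) × AddCircle (1 : ℝ) :=
    fun p => (p.1, p.2 1, p.2 2 + ((p.1 * α₂ : ℝ) : AddCircle (1 : ℝ)))
  have hΨ : Continuous Ψ := by fun_prop
  have hmaps : MapsTo Ψ (range fun km : ℕ × ℕ => ((km.2 : ℝ) - km.1 * v 0, km.1 • torusProj _ v))
      (Sset θ α₁ α₂) := by
    rintro _ ⟨⟨k, m⟩, rfl⟩
    refine ⟨k, m, ?_⟩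
    simp only [Ψ, nsmul_torusProj_apply, ← AddCircle.coe_add, v, Matrix.cons_val]
    ring_nf
  rintro ⟨x, a, b⟩
  have hmem := mem_closure_range_sub_nsmul_torusProj (i := 0) hθ
    (denseRange_nsmul_torusProj v hli) (c := ![-x, a, b - ((x * α₂ : ℝ) : AddCircle (1 : ℝ))]) rfl
  simpa [Ψ] using map_mem_closure hΨ hmem hmaps

/-- If `1, θ, α₁, θ·α₂` are linearly independent over `ℚ`, then `S` is dense in
`ℝ × (ℝ/ℤ) × (ℝ/ℤ)`. -/
theorem stmt12 (θ α₁ α₂ : ℝ) (hθ : 0 < θ)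
    (hα₁ : α₁ ∈ Set.Ioo (0 : ℝ) (1 / 2)) (hα₂ : α₂ ∈ Set.Ioo (0 : ℝ) (1 / 2))
    (hli : LinearIndependent ℚ ![(1 : ℝ), θ, α₁, θ * α₂]) :
    Dense (Sset θ α₁ α₂) :=
  stmt12_general θ α₁ α₂ hθ hli
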